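/- Let (a,b) be a fictitious-play trajectory. Then for every t ≥ 0: (a) if round t is not axis-crossing then ρ_{t+1} = ρ_t; (b) ρ_t ≤ ρ_{t+1} ≤ ρ_t + 2; (c) ρ_0 = 0; and (d) ρ_t ≥ 1 for every t ≥ 1. In particular the radius ρ_t is non-decreasing in t. -/

import Mathlib

open MeasureTheory

/-- Bob's choice of the left or right piece. -/
inductive Choice
  | L
  | R
deriving DecidableEq

/-- The cumulative valuation `V(x) = ∫_0^x v`. -/
noncomputable def cumul (v : ℝ → ℝ) (x : ℝ) : ℝ := ∫ y in (0:ℝ)..x, v y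

/-- `v` is an integrable value density on `[0,1]`, bounded between `lo` and `hi`,
integrating to `1`. -/
def IsDensity (lo hi : ℝ) (v : ℝ → ℝ) : Prop :=
  IntervalIntegrable v volume 0 1 ∧
  (∀ x ∈ Set.Icc (0:ℝ) 1, lo ≤ v x ∧ v x ≤ hi) ∧
  (∫ y in (0:ℝ)..1, v y) = 1

/-- Alice's round-`t` utility: if Bob picks `L` she gets `[a_t,1]`, else `[0,a_t]`. -/
noncomputable def uA (vA : ℝ → ℝ) (a : ℕ → ℝ) (b : ℕ → Choice) (t : ℕ) : ℝ :=
  if b t = Choice.L then 1 - cumul vA (a t) else cumul vA (a t)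

/-- Bob's round-`t` utility: if he picks `L` he gets `[0,a_t]`, else `[a_t,1]`. -/
noncomputable def uB (vB : ℝ → ℝ) (a : ℕ → ℝ) (b : ℕ → Choice) (t : ℕ) : ℝ :=
  if b t = Choice.L then cumul vB (a t) else 1 - cumul vB (a t)

/-- `α_t = r_t − ℓ_t`: number of `R` choices minus number of `L` choices up to round `t`. -/
noncomputable def alphaFP (b : ℕ → Choice) (t : ℕ) : ℝ :=
  ∑ i ∈ Finset.Icc 1 t, (if b i = Choice.R then (1:ℝ) else -1)

/-- `β_t = Σ_{i=1}^t (2 V_B(a_i) − 1)`. -/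
noncomputable def betaFP (vB : ℝ → ℝ) (a : ℕ → ℝ) (t : ℕ) : ℝ :=
  ∑ i ∈ Finset.Icc 1 t, (2 * cumul vB (a i) - 1)

/-- The radius `ρ_t = |α_t| + |β_t|`. -/
noncomputable def rhoFP (vB : ℝ → ℝ) (a : ℕ → ℝ) (b : ℕ → Choice) (t : ℕ) : ℝ :=
  |alphaFP b t| + |betaFP vB a t|

/-- `(a,b)` is a fictitious-play trajectory. -/
def IsFictitiousPlay (vB : ℝ → ℝ) (a : ℕ → ℝ) (b : ℕ → Choice) : Prop :=
  ∀ t : ℕ,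
    (0 < alphaFP b t → a (t+1) = 1) ∧
    (alphaFP b t < 0 → a (t+1) = 0) ∧
    (0 < betaFP vB a t → b (t+1) = Choice.L) ∧
    (betaFP vB a t < 0 → b (t+1) = Choice.R)

/-- Round `t` is axis-crossing. -/
def AxisCrossing (vB : ℝ → ℝ) (a : ℕ → ℝ) (b : ℕ → Choice) (t : ℕ) : Prop :=
  alphaFP b t = 0 ∨
  (betaFP vB a t ≤ 0 ∧ 0 < betaFP vB a (t+1)) ∨
  (0 ≤ betaFP vB a t ∧ betaFP vB a (t+1) < 0)


/-!
Write one round as `(α, β) ↦ (α + s, β + d)`. Whenever `α ≠ 0` Alice cuts at an endpoint, so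
`d = sign α`; whenever `β ≠ 0` Bob's choice gives `s = -sign β`. Off the axes the step
`(s, d) = (-sign β, sign α)` is therefore tangent to the `ℓ¹`-sphere through `(α, β)`: the
radius `|α| + |β|` is unchanged unless `β` changes sign (the integer `α` can reach `0` but never
jump over it), and on the axes or at a sign change it can only grow. Since `|s|, |d| ≤ 1` it grows
by at most `2`.
-/

namespace Choice

/-- The increment of `α` caused by a choice. -/
def sign (c : Choice) : ℝ := if c = R then 1 else -1

theorem abs_sign (c : Choice) : |c.sign| = 1 := by
  unfold sign
  split_ifs <;> norm_num

end Choice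

section Density

variable {lo hi : ℝ} {v : ℝ → ℝ}

theorem cumul_zero (v : ℝ → ℝ) : cumul v 0 = 0 :=
  intervalIntegral.integral_same

theorem IsDensity.cumul_one (hv : IsDensity lo hi v) : cumul v 1 = 1 :=
  hv.2.2

theorem IsDensity.cumul_mem_Icc (hlo : 0 ≤ lo) (hv : IsDensity lo hi v) {x : ℝ}
    (hx : x ∈ Set.Icc (0:ℝ) 1) : cumul v x ∈ Set.Icc (0:ℝ) 1 := by
  obtain ⟨hint, hbd, _⟩ := hv
  have hnonneg {y : ℝ} (hy : y ∈ Set.Icc (0:ℝ) 1) : 0 ≤ v y := hlo.trans (hbd y hy).1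
  have hsub : Set.uIcc 0 x ⊆ Set.uIcc 0 1 ∧ Set.uIcc x 1 ⊆ Set.uIcc 0 1 := by
    simp only [Set.uIcc_of_le hx.1, Set.uIcc_of_le hx.2, Set.uIcc_of_le zero_le_one]
    exact ⟨Set.Icc_subset_Icc le_rfl hx.2, Set.Icc_subset_Icc hx.1 le_rfl⟩
  have hsplit := intervalIntegral.integral_add_adjacent_intervals
    (hint.mono_set hsub.1) (hint.mono_set hsub.2)
  have hleft : 0 ≤ ∫ y in (0:ℝ)..x, v y :=
    intervalIntegral.integral_nonneg hx.1 fun y hy => hnonneg ⟨hy.1, hy.2.trans hx.2⟩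
  have hright : 0 ≤ ∫ y in x..(1:ℝ), v y :=
    intervalIntegral.integral_nonneg hx.2 fun y hy => hnonneg ⟨hx.1.trans hy.1, hy.2⟩
  exact ⟨hleft, by rw [cumul]; linarith⟩

end Density

theorem alphaFP_succ (b : ℕ → Choice) (t : ℕ) :
    alphaFP b (t + 1) = alphaFP b t + (b (t + 1)).sign := by
  unfold alphaFP
  rw [Finset.sum_Icc_succ_top (by omega)]
  rfl

theorem betaFP_succ (vB : ℝ → ℝ) (a : ℕ → ℝ) (t : ℕ) :
    betaFP vB a (t + 1) = betaFP vB a t + (2 * cumul vB (a (t + 1)) - 1) := by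
  unfold betaFP
  rw [Finset.sum_Icc_succ_top (by omega)]

theorem rhoFP_succ (vB : ℝ → ℝ) (a : ℕ → ℝ) (b : ℕ → Choice) (t : ℕ) :
    rhoFP vB a b (t + 1) =
      |alphaFP b t + (b (t + 1)).sign| + |betaFP vB a t + (2 * cumul vB (a (t + 1)) - 1)| := by
  rw [rhoFP, alphaFP_succ, betaFP_succ]

theorem rhoFP_zero (vB : ℝ → ℝ) (a : ℕ → ℝ) (b : ℕ → Choice) : rhoFP vB a b 0 = 0 := by
  simp [rhoFP, alphaFP, betaFP]

theorem abs_alphaFP_one (b : ℕ → Choice) : |alphaFP b 1| = 1 := by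
  rw [alphaFP, Finset.Icc_self, Finset.sum_singleton]
  exact (b 1).abs_sign

theorem alphaFP_eq_intCast (b : ℕ → Choice) (t : ℕ) :
    alphaFP b t = ((∑ i ∈ Finset.Icc 1 t, if b i = Choice.R then 1 else -1 : ℤ) : ℝ) := by
  push_cast [alphaFP]
  rfl

theorem le_neg_one_or_one_le_of_mem_range_intCast {x : ℝ} (hx : x ∈ Set.range ((↑) : ℤ → ℝ))
    (hx₀ : x ≠ 0) : x ≤ -1 ∨ 1 ≤ x := by
  obtain ⟨n, rfl⟩ := hx
  exact le_abs'.mp (by exact_mod_cast Int.one_le_abs (by exact_mod_cast hx₀))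

/-- One round `(α, β) ↦ (α + s, β + d)` of fictitious play, as seen in the `(α, β)`-plane. -/
structure IsFPIncrement (α β s d : ℝ) : Prop where
  abs_s : |s| = 1
  abs_d_le : |d| ≤ 1
  d_eq_one : 0 < α → d = 1
  d_eq_neg_one : α < 0 → d = -1
  s_eq_neg_one : 0 < β → s = -1
  s_eq_one : β < 0 → s = 1

namespace IsFPIncrement

variable {α β s d : ℝ}

theorem abs_add_abs_le (h : IsFPIncrement α β s d) : |α| + |β| ≤ |α + s| + |β + d| := by
  have hs := abs_le.mp h.abs_s.le
  rcases lt_trichotomy α 0 with hα | rfl | hα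
  · rw [h.d_eq_neg_one hα, abs_of_neg hα]
    rcases lt_trichotomy β 0 with hβ | rfl | hβ
    · rw [h.s_eq_one hβ]; linarith [neg_le_abs (α + 1), abs_of_neg hβ, neg_le_abs (β + -1)]
    · rw [abs_zero, zero_add, abs_neg, abs_one]; linarith [neg_le_abs (α + s)]
    · rw [h.s_eq_neg_one hβ]; linarith [neg_le_abs (α + -1), abs_of_pos hβ, le_abs_self (β + -1)]
  · rw [zero_add, h.abs_s, abs_zero, zero_add]
    have := abs_add_le (β + d) (-d)
    rw [add_neg_cancel_right, abs_neg] at this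
    linarith [h.abs_d_le]
  · rw [h.d_eq_one hα, abs_of_pos hα]
    rcases lt_trichotomy β 0 with hβ | rfl | hβ
    · rw [h.s_eq_one hβ]; linarith [le_abs_self (α + 1), abs_of_neg hβ, neg_le_abs (β + 1)]
    · rw [abs_zero, zero_add, abs_one]; linarith [le_abs_self (α + s)]
    · rw [h.s_eq_neg_one hβ]; linarith [le_abs_self (α + -1), abs_of_pos hβ, le_abs_self (β + 1)]

theorem d_ne_zero (h : IsFPIncrement α β s d) (hα : α ≠ 0) : d ≠ 0 := by
  rcases lt_or_gt_of_ne hα with hα | hα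
  · simp [h.d_eq_neg_one hα]
  · simp [h.d_eq_one hα]

theorem abs_add_abs_le_add_two (h : IsFPIncrement α β s d) :
    |α + s| + |β + d| ≤ |α| + |β| + 2 := by
  linarith [abs_add_le α s, abs_add_le β d, h.abs_s, h.abs_d_le]

theorem abs_add_abs_eq (h : IsFPIncrement α β s d) (hα : α ∈ Set.range ((↑) : ℤ → ℝ))
    (hnc : ¬ (α = 0 ∨ (β ≤ 0 ∧ 0 < β + d) ∨ (0 ≤ β ∧ β + d < 0))) :
    |α + s| + |β + d| = |α| + |β| := by
  simp only [not_or, not_and, not_lt] at hnc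
  obtain ⟨hα₀, hβneg, hβpos⟩ := hnc
  have hβ₀ : β ≠ 0 := by
    rintro rfl
    exact h.d_ne_zero hα₀ <|
      le_antisymm (by simpa using hβneg le_rfl) (by simpa using hβpos le_rfl)
  rcases le_neg_one_or_one_le_of_mem_range_intCast hα hα₀ with hα | hα
  · have hα' : α < 0 := by linarith
    rw [h.d_eq_neg_one hα'] at hβneg hβpos ⊢
    rcases hβ₀.lt_or_gt with hβ | hβ
    · rw [h.s_eq_one hβ, abs_of_nonpos (by linarith : α + 1 ≤ 0),
        abs_of_neg (by linarith : β + -1 < 0), abs_of_neg hα', abs_of_neg hβ]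
      ring
    · rw [h.s_eq_neg_one hβ, abs_of_neg (by linarith : α + -1 < 0),
        abs_of_nonneg (hβpos hβ.le), abs_of_neg hα', abs_of_pos hβ]
      ring
  · have hα' : 0 < α := by linarith
    rw [h.d_eq_one hα'] at hβneg hβpos ⊢
    rcases hβ₀.lt_or_gt with hβ | hβ
    · rw [h.s_eq_one hβ, abs_of_pos (by linarith : 0 < α + 1),
        abs_of_nonpos (hβneg hβ.le), abs_of_pos hα', abs_of_neg hβ]
      ring
    · rw [h.s_eq_neg_one hβ, abs_of_nonneg (by linarith : 0 ≤ α + -1),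
        abs_of_pos (by linarith : 0 < β + 1), abs_of_pos hα', abs_of_pos hβ]
      ring

end IsFPIncrement

theorem IsFictitiousPlay.isFPIncrement {lo hi : ℝ} {vB : ℝ → ℝ} {a : ℕ → ℝ} {b : ℕ → Choice}
    (hfp : IsFictitiousPlay vB a b) (hlo : 0 ≤ lo) (hB : IsDensity lo hi vB) {t : ℕ}
    (ha : a (t + 1) ∈ Set.Icc (0:ℝ) 1) :
    IsFPIncrement (alphaFP b t) (betaFP vB a t) (b (t + 1)).sign
      (2 * cumul vB (a (t + 1)) - 1) where
  abs_s := (b (t + 1)).abs_sign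
  abs_d_le := by
    obtain ⟨h₀, h₁⟩ := hB.cumul_mem_Icc hlo ha
    exact abs_le.mpr ⟨by linarith, by linarith⟩
  d_eq_one h := by rw [(hfp t).1 h, hB.cumul_one]; norm_num
  d_eq_neg_one h := by rw [(hfp t).2.1 h, cumul_zero]; norm_num
  s_eq_neg_one h := by rw [(hfp t).2.2.1 h]; rfl
  s_eq_one h := by rw [(hfp t).2.2.2 h]; rfl

theorem radius_monotone_general
    (δ Δ : ℝ) (hδ : 0 < δ)
    (vB : ℝ → ℝ) (hB : IsDensity δ Δ vB)
    (a : ℕ → ℝ) (b : ℕ → Choice)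
    (ha : ∀ t : ℕ, 1 ≤ t → a t ∈ Set.Icc (0:ℝ) 1)
    (hfp : IsFictitiousPlay vB a b) (t : ℕ) :
    (¬ AxisCrossing vB a b t → rhoFP vB a b (t+1) = rhoFP vB a b t) ∧
    (rhoFP vB a b t ≤ rhoFP vB a b (t+1) ∧ rhoFP vB a b (t+1) ≤ rhoFP vB a b t + 2) ∧
    rhoFP vB a b 0 = 0 ∧
    (1 ≤ t → 1 ≤ rhoFP vB a b t) := by
  have hstep (n : ℕ) := hfp.isFPIncrement hδ.le hB (ha (n + 1) n.succ_pos)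
  have hmono : Monotone (rhoFP vB a b) := monotone_nat_of_le_succ fun n => by
    rw [rhoFP_succ]
    exact (hstep n).abs_add_abs_le
  refine ⟨fun hnc => ?_, ⟨hmono t.le_succ, ?_⟩, rhoFP_zero vB a b, fun ht => ?_⟩
  · rw [AxisCrossing, betaFP_succ] at hnc
    rw [rhoFP_succ]
    exact (hstep t).abs_add_abs_eq ⟨_, (alphaFP_eq_intCast b t).symm⟩ hnc
  · rw [rhoFP_succ]
    exact (hstep t).abs_add_abs_le_add_two
  · calc (1 : ℝ) = |alphaFP b 1| := (abs_alphaFP_one b).symm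
      _ ≤ rhoFP vB a b 1 := le_add_of_nonneg_right (abs_nonneg _)
      _ ≤ rhoFP vB a b t := hmono ht

/-- Under fictitious play the radius `ρ` is non-decreasing: it is constant
on non-axis-crossing rounds, increases by at most `2` per round, starts at `0`, and is at
least `1` from round `1` on. -/
theorem radius_monotone
    (δ Δ : ℝ) (hδ : 0 < δ) (hδΔ : δ ≤ Δ)
    (vA vB : ℝ → ℝ) (hA : IsDensity δ Δ vA) (hB : IsDensity δ Δ vB)
    (a : ℕ → ℝ) (b : ℕ → Choice)
    (ha : ∀ t : ℕ, 1 ≤ t → a t ∈ Set.Icc (0:ℝ) 1)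
    (hfp : IsFictitiousPlay vB a b) (t : ℕ) :
    (¬ AxisCrossing vB a b t → rhoFP vB a b (t+1) = rhoFP vB a b t) ∧
    (rhoFP vB a b t ≤ rhoFP vB a b (t+1) ∧ rhoFP vB a b (t+1) ≤ rhoFP vB a b t + 2) ∧
    rhoFP vB a b 0 = 0 ∧
    (1 ≤ t → 1 ≤ rhoFP vB a b t) :=
  radius_monotone_general δ Δ hδ vB hB a b ha hfp t
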